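/- Fix d01, d02, d10, d20 ∈ ℝ³ and symmetric matrices M₀, M₁, M₂, J₀, J₁, J₂ ∈ ℝ^{3×3}. For R₀, R₁, R₂ ∈ SO(3), v ∈ ℝ³ and Ω₀, Ω₁, Ω₂ ∈ ℝ³, define V₀ = R₀ᵀ·v, Vᵢ = Rᵢᵀ·v − Rᵢᵀ·R₀·hat(d0i)·Ω₀ + hat(di0)·Ωᵢ for i ∈ {1,2}, and the total kinetic energy T(R₀,R₁,R₂,v,Ω₀,Ω₁,Ω₂) = Σ_{i=0}^{2} (½·Vᵢᵀ·Mᵢ·Vᵢ + ½·Ωᵢᵀ·Jᵢ·Ωᵢ). Then T is invariant under the left action of SE(3): for every R ∈ SO(3), T(R·R₀, R·R₁, R·R₂, R·v, Ω₀, Ω₁, Ω₂) = T(R₀, R₁, R₂, v, Ω₀, Ω₁, Ω₂), and T does not depend on the position x of the system, so it is also invariant under translations. -/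

import Mathlib

open Matrix

/-- The hat map: `hat x` is the skew-symmetric matrix with `hat x *ᵥ y = x × y`. -/
noncomputable def hat (x : Fin 3 → ℝ) : Matrix (Fin 3) (Fin 3) ℝ :=
  !![0, -x 2, x 1; x 2, 0, -x 0; -x 1, x 0, 0]

/-- The total kinetic energy `T = Σᵢ (½ Vᵢᵀ Mᵢ Vᵢ + ½ Ωᵢᵀ Jᵢ Ωᵢ)` of three connected
rigid bodies in a perfect fluid, where `V₀ = R₀ᵀ v` and
`Vᵢ = Rᵢᵀ v − Rᵢᵀ R₀ hat(d0i) Ω₀ + hat(di0) Ωᵢ` for `i = 1, 2`. -/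
noncomputable def kineticEnergy (d01 d02 d10 d20 : Fin 3 → ℝ)
    (M0 M1 M2 J0 J1 J2 : Matrix (Fin 3) (Fin 3) ℝ)
    (R0 R1 R2 : Matrix (Fin 3) (Fin 3) ℝ) (v Ω0 Ω1 Ω2 : Fin 3 → ℝ) : ℝ :=
  let V0 := R0ᵀ.mulVec v
  let V1 := R1ᵀ.mulVec v - (R1ᵀ * R0 * hat d01).mulVec Ω0 + (hat d10).mulVec Ω1
  let V2 := R2ᵀ.mulVec v - (R2ᵀ * R0 * hat d02).mulVec Ω0 + (hat d20).mulVec Ω2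
  (1/2) * (V0 ⬝ᵥ M0.mulVec V0) + (1/2) * (Ω0 ⬝ᵥ J0.mulVec Ω0)
    + (1/2) * (V1 ⬝ᵥ M1.mulVec V1) + (1/2) * (Ω1 ⬝ᵥ J1.mulVec Ω1)
    + (1/2) * (V2 ⬝ᵥ M2.mulVec V2) + (1/2) * (Ω2 ⬝ᵥ J2.mulVec Ω2)

/-- The Lagrangian of the connected rigid bodies (equal to the kinetic energy,
as a function on the configuration manifold including the position `x`). -/
noncomputable def lagrangian (d01 d02 d10 d20 : Fin 3 → ℝ)
    (M0 M1 M2 J0 J1 J2 : Matrix (Fin 3) (Fin 3) ℝ)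
    (x : Fin 3 → ℝ) (R0 R1 R2 : Matrix (Fin 3) (Fin 3) ℝ)
    (v Ω0 Ω1 Ω2 : Fin 3 → ℝ) : ℝ :=
  kineticEnergy d01 d02 d10 d20 M0 M1 M2 J0 J1 J2 R0 R1 R2 v Ω0 Ω1 Ω2

/-! The body-frame velocities depend on the rotations and on `v` only through `Rᵢᵀ R₀` and
`Rᵢᵀ v`, and these are unchanged when all `Rᵢ` and `v` are rotated by one orthogonal `R`, since
`(R A)ᵀ (R B) = Aᵀ Rᵀ R B = Aᵀ B`. Translations do not act on `T` at all. -/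

namespace Matrix

variable {l m n α : Type*} [Fintype l] [Fintype m] [DecidableEq m] [CommSemiring α]
  {R : Matrix l m α}

theorem transpose_mul_mul_of_transpose_mul_self {k : Type*} (hR : Rᵀ * R = 1)
    (A : Matrix m n α) (B : Matrix m k α) : (R * A)ᵀ * (R * B) = Aᵀ * B := by
  rw [transpose_mul, Matrix.mul_assoc, ← Matrix.mul_assoc Rᵀ, hR, Matrix.one_mul]

theorem transpose_mul_mulVec_mulVec_of_transpose_mul_self [Fintype n] (hR : Rᵀ * R = 1)
    (A : Matrix m n α) (v : m → α) : (R * A)ᵀ *ᵥ (R *ᵥ v) = Aᵀ *ᵥ v := by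
  rw [mulVec_mulVec, transpose_mul, Matrix.mul_assoc, hR, Matrix.mul_one]

end Matrix

theorem kineticEnergy_mul_left_of_transpose_mul_self (d01 d02 d10 d20 : Fin 3 → ℝ)
    (M0 M1 M2 J0 J1 J2 : Matrix (Fin 3) (Fin 3) ℝ) {R : Matrix (Fin 3) (Fin 3) ℝ}
    (hR : Rᵀ * R = 1) (R0 R1 R2 : Matrix (Fin 3) (Fin 3) ℝ) (v Ω0 Ω1 Ω2 : Fin 3 → ℝ) :
    kineticEnergy d01 d02 d10 d20 M0 M1 M2 J0 J1 J2 (R * R0) (R * R1) (R * R2) (R *ᵥ v)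
        Ω0 Ω1 Ω2
      = kineticEnergy d01 d02 d10 d20 M0 M1 M2 J0 J1 J2 R0 R1 R2 v Ω0 Ω1 Ω2 := by
  simp only [kineticEnergy, transpose_mul_mulVec_mulVec_of_transpose_mul_self hR,
    transpose_mul_mul_of_transpose_mul_self hR]

theorem stmt3_general
    (d01 d02 d10 d20 : Fin 3 → ℝ)
    (M0 M1 M2 J0 J1 J2 : Matrix (Fin 3) (Fin 3) ℝ) :
    (∀ (R R0 R1 R2 : Matrix (Fin 3) (Fin 3) ℝ) (v Ω0 Ω1 Ω2 : Fin 3 → ℝ),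
      Rᵀ * R = 1 ∧ R.det = 1 →
      R0ᵀ * R0 = 1 ∧ R0.det = 1 →
      R1ᵀ * R1 = 1 ∧ R1.det = 1 →
      R2ᵀ * R2 = 1 ∧ R2.det = 1 →
      kineticEnergy d01 d02 d10 d20 M0 M1 M2 J0 J1 J2
          (R * R0) (R * R1) (R * R2) (R.mulVec v) Ω0 Ω1 Ω2
        = kineticEnergy d01 d02 d10 d20 M0 M1 M2 J0 J1 J2 R0 R1 R2 v Ω0 Ω1 Ω2) ∧
    (∀ (x a : Fin 3 → ℝ) (R0 R1 R2 : Matrix (Fin 3) (Fin 3) ℝ)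
        (v Ω0 Ω1 Ω2 : Fin 3 → ℝ),
      lagrangian d01 d02 d10 d20 M0 M1 M2 J0 J1 J2 (x + a) R0 R1 R2 v Ω0 Ω1 Ω2
        = lagrangian d01 d02 d10 d20 M0 M1 M2 J0 J1 J2 x R0 R1 R2 v Ω0 Ω1 Ω2) := by
  exact ⟨fun R R0 R1 R2 v Ω0 Ω1 Ω2 ⟨hR, _⟩ _ _ _ =>
    kineticEnergy_mul_left_of_transpose_mul_self d01 d02 d10 d20 M0 M1 M2 J0 J1 J2 hR
      R0 R1 R2 v Ω0 Ω1 Ω2,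
    fun _ _ _ _ _ _ _ _ _ => rfl⟩

/-- The total kinetic energy is invariant under the left action of `SE(3)`:
invariant under every rigid rotation `R ∈ SO(3)` of the entire system, and,
since it does not depend on the position `x`, invariant under translations. -/
theorem stmt3
    (d01 d02 d10 d20 : Fin 3 → ℝ)
    (M0 M1 M2 J0 J1 J2 : Matrix (Fin 3) (Fin 3) ℝ)
    (hM0 : M0.IsSymm) (hM1 : M1.IsSymm) (hM2 : M2.IsSymm)
    (hJ0 : J0.IsSymm) (hJ1 : J1.IsSymm) (hJ2 : J2.IsSymm) :
    (∀ (R R0 R1 R2 : Matrix (Fin 3) (Fin 3) ℝ) (v Ω0 Ω1 Ω2 : Fin 3 → ℝ),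
      Rᵀ * R = 1 ∧ R.det = 1 →
      R0ᵀ * R0 = 1 ∧ R0.det = 1 →
      R1ᵀ * R1 = 1 ∧ R1.det = 1 →
      R2ᵀ * R2 = 1 ∧ R2.det = 1 →
      kineticEnergy d01 d02 d10 d20 M0 M1 M2 J0 J1 J2
          (R * R0) (R * R1) (R * R2) (R.mulVec v) Ω0 Ω1 Ω2
        = kineticEnergy d01 d02 d10 d20 M0 M1 M2 J0 J1 J2 R0 R1 R2 v Ω0 Ω1 Ω2) ∧
    (∀ (x a : Fin 3 → ℝ) (R0 R1 R2 : Matrix (Fin 3) (Fin 3) ℝ)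
        (v Ω0 Ω1 Ω2 : Fin 3 → ℝ),
      lagrangian d01 d02 d10 d20 M0 M1 M2 J0 J1 J2 (x + a) R0 R1 R2 v Ω0 Ω1 Ω2
        = lagrangian d01 d02 d10 d20 M0 M1 M2 J0 J1 J2 x R0 R1 R2 v Ω0 Ω1 Ω2) :=
  stmt3_general d01 d02 d10 d20 M0 M1 M2 J0 J1 J2
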